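/- Fix dimensions d, p ≥ 1, cluster count K ≥ 1, times T ≥ 1 with particle counts n_t ≥ 1, covariates X^{(1)},…,X^{(T)} ∈ ℝ^p, and data points y_i^{(t)} (i = 1,…,n_t, t = 1,…,T) all lying in an axis-aligned cube 𝒴 ⊆ ℝ^d of side length R > 0. A parameter is θ = (α, β, Σ) with α = (α_{0k} ∈ ℝ, α_k ∈ ℝ^p)_{k=1}^K, β = (β_{0k} ∈ ℝ^d, β_k ∈ ℝ^{p×d})_{k=1}^K, and Σ = (Σ_k)_{k=1}^K symmetric positive definite d×d matrices. Define π_{kt}(α) = exp(α_{0k} + X^{(t)ᵀ}α_k) / Σ_{l=1}^K exp(α_{0l} + X^{(t)ᵀ}α_l), μ_{kt}(β) = β_{0k} + β_kᵀ X^{(t)}, φ(y; μ, Σ) = (2π)^{−d/2} det(Σ)^{−1/2} exp(−(1/2)(y−μ)ᵀΣ^{−1}(y−μ)), and for a data configuration z = (z_i^{(t)}) the objective f(θ, z) = −(1/N) Σ_{t=1}^T Σ_{i=1}^{n_t} log( Σ_{k=1}^K π_{kt}(α) φ(z_i^{(t)}; μ_{kt}(β), Σ_k) ) + λ_α Σ_{k=1}^K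 ‖α_k‖₁ + λ_β Σ_{k=1}^K ‖β_k‖₁, where N = Σ_t n_t and λ_α, λ_β ≥ 0. Let Θ be a compact set of parameters such that there is c > 0 with Σ_k ⪰ cI_d for all θ ∈ Θ and all k. For each D = 1, 2, … set B = D^d, partition the cube 𝒴 into B congruent axis-aligned subcubes of side R/D with centers ỹ_b, and let h_B(y) be the center of the subcube containing y, so that ‖h_B(y) − y‖_∞ ≤ R·B^{−1/d} for all y ∈ 𝒴. Then: (i) the sets Θ̂ = argmin_{θ∈Θ} f(θ, y) and Θ̃_B = argmin_{θ∈Θ} f(θ, h_B(y)) are nonempty; and (ii) for any choice of θ̃_B ∈ Θ̃_B for each B, there exists a subsequence (θ̃_{s_B}) converging to a point of Θ̂, i.e. lim_{B→∞} θ̃_{s_B} ∈ Θ̂. -/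

import Mathlib

open Filter Topology

set_option synthInstance.maxHeartbeats 1000000
set_option maxHeartbeats 1000000

/-- The parameter `θ = (α₀, α, β₀, β, Σ)` of the mixture of multivariate
regressions model: softmax intercepts and coefficients, mean intercepts and
coefficient matrices, and covariance matrices, for `K` clusters. -/
abbrev MixParam (d p K : ℕ) : Type :=
  (Fin K → ℝ) × (Fin K → Fin p → ℝ) × (Fin K → Fin d → ℝ) ×
    (Fin K → Matrix (Fin p) (Fin d) ℝ) × (Fin K → Matrix (Fin d) (Fin d) ℝ)

/-- The penalized negative log-likelihood objective
`f(θ, z) = −(1/N) ∑ₜ ∑ᵢ log(∑ₖ π_{kt}(α) φ(z_i^{(t)}; μ_{kt}(β), Σ_k))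
  + λ_α ∑ₖ ‖α_k‖₁ + λ_β ∑ₖ ‖β_k‖₁`,
with softmax mixture probabilities `π_{kt}(α)`, regression means
`μ_{kt}(β) = β_{0k} + β_kᵀ X^{(t)}`, and Gaussian densities `φ`. -/
noncomputable def mixObj (d p K T : ℕ) (n : Fin T → ℕ)
    (X : Fin T → Fin p → ℝ) (lamA lamB : ℝ)
    (θ : MixParam d p K)
    (z : (t : Fin T) → Fin (n t) → Fin d → ℝ) : ℝ :=
  let α0 := θ.1
  let α := θ.2.1
  let β0 := θ.2.2.1
  let β := θ.2.2.2.1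
  let S := θ.2.2.2.2
  let N : ℝ := ∑ t, (n t : ℝ)
  let π : Fin K → Fin T → ℝ := fun k t =>
    Real.exp (α0 k + ∑ j, X t j * α k j) / ∑ l, Real.exp (α0 l + ∑ j, X t j * α l j)
  let μ : Fin K → Fin T → Fin d → ℝ := fun k t j => β0 k j + ∑ l, β k l j * X t l
  let φ : Fin K → Fin T → (Fin d → ℝ) → ℝ := fun k t v =>
    (2 * Real.pi) ^ (-(d : ℝ) / 2) * (S k).det ^ (-(1 : ℝ) / 2) *
      Real.exp (-(1 / 2) * dotProduct (v - μ k t) ((S k)⁻¹.mulVec (v - μ k t)))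
  let nll : ℝ := -((1 / N) * ∑ t, ∑ i, Real.log (∑ k, π k t * φ k t (z t i)))
  nll + lamA * (∑ k, ∑ j, |α k j|) + lamB * (∑ k, ∑ l, ∑ j, |β k l j|)

/-- The objective as an explicit function of the pair `(θ, z)`. -/
noncomputable def mixObjExp (d p K T : ℕ) (n : Fin T → ℕ)
    (X : Fin T → Fin p → ℝ) (lamA lamB : ℝ)
    (q : MixParam d p K × ((t : Fin T) → Fin (n t) → Fin d → ℝ)) : ℝ :=
  -((1 / (∑ t, (n t : ℝ))) * ∑ t, ∑ i, Real.log (∑ k,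
    (Real.exp (q.1.1 k + ∑ j, X t j * q.1.2.1 k j) /
      ∑ l, Real.exp (q.1.1 l + ∑ j, X t j * q.1.2.1 l j)) *
    ((2 * Real.pi) ^ (-(d : ℝ) / 2) * (q.1.2.2.2.2 k).det ^ (-(1 : ℝ) / 2) *
      Real.exp (-(1 / 2) * dotProduct
        (q.2 t i - fun j => q.1.2.2.1 k j + ∑ l, q.1.2.2.2.1 k l j * X t l)
        ((q.1.2.2.2.2 k)⁻¹.mulVec
          (q.2 t i - fun j => q.1.2.2.1 k j + ∑ l, q.1.2.2.2.1 k l j * X t l)))))) +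
    lamA * (∑ k, ∑ j, |q.1.2.1 k j|) + lamB * (∑ k, ∑ l, ∑ j, |q.1.2.2.2.1 k l j|)

theorem mixObj_eq_exp (d p K T : ℕ) (n : Fin T → ℕ)
    (X : Fin T → Fin p → ℝ) (lamA lamB : ℝ)
    (θ : MixParam d p K) (z : (t : Fin T) → Fin (n t) → Fin d → ℝ) :
    mixObj d p K T n X lamA lamB θ z = mixObjExp d p K T n X lamA lamB (θ, z) := rfl

theorem mixObjExp_contAt {d p K T : ℕ} (hK : 0 < K) {n : Fin T → ℕ}
    {X : Fin T → Fin p → ℝ} {lamA lamB : ℝ}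
    (q0 : MixParam d p K × ((t : Fin T) → Fin (n t) → Fin d → ℝ))
    (hdet : ∀ k, 0 < (q0.1.2.2.2.2 k).det) :
    ContinuousAt (mixObjExp d p K T n X lamA lamB) q0 := by
  have hKne : Nonempty (Fin K) := ⟨⟨0, hK⟩⟩
  have hα0 : Continuous fun q : MixParam d p K × ((t : Fin T) → Fin (n t) → Fin d → ℝ) =>
      q.1.1 := continuous_fst.fst
  have hα : Continuous fun q : MixParam d p K × ((t : Fin T) → Fin (n t) → Fin d → ℝ) =>
      q.1.2.1 := continuous_fst.snd.fst
  have hβ0 : Continuous fun q : MixParam d p K × ((t : Fin T) → Fin (n t) → Fin d → ℝ) =>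
      q.1.2.2.1 := continuous_fst.snd.snd.fst
  have hβ : Continuous fun q : MixParam d p K × ((t : Fin T) → Fin (n t) → Fin d → ℝ) =>
      q.1.2.2.2.1 := continuous_fst.snd.snd.snd.fst
  have hS : ∀ k, Continuous fun q : MixParam d p K × ((t : Fin T) → Fin (n t) → Fin d → ℝ) =>
      q.1.2.2.2.2 k := fun k => (continuous_apply k).comp continuous_fst.snd.snd.snd.snd
  have hz : ∀ t i, Continuous
      fun q : MixParam d p K × ((t : Fin T) → Fin (n t) → Fin d → ℝ) => q.2 t i := fun t i =>
    (continuous_apply i).comp ((continuous_apply t).comp continuous_snd)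
  have hden : ∀ t, ∀ q : MixParam d p K × ((t : Fin T) → Fin (n t) → Fin d → ℝ),
      0 < ∑ l, Real.exp (q.1.1 l + ∑ j, X t j * q.1.2.1 l j) := fun t q =>
    Finset.sum_pos (fun l _ => Real.exp_pos _) Finset.univ_nonempty
  have hπ : ∀ k t, Continuous
      fun q : MixParam d p K × ((t : Fin T) → Fin (n t) → Fin d → ℝ) =>
      Real.exp (q.1.1 k + ∑ j, X t j * q.1.2.1 k j) /
        ∑ l, Real.exp (q.1.1 l + ∑ j, X t j * q.1.2.1 l j) := by
    intro k t
    have hnum : ∀ k : Fin K, Continuous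
        fun q : MixParam d p K × ((t : Fin T) → Fin (n t) → Fin d → ℝ) =>
        Real.exp (q.1.1 k + ∑ j, X t j * q.1.2.1 k j) := by
      intro k
      apply Real.continuous_exp.comp
      exact ((continuous_apply k).comp hα0).add
        (continuous_finset_sum _ fun j _ => continuous_const.mul
          ((continuous_apply j).comp ((continuous_apply k).comp hα)))
    exact (hnum k).div (continuous_finset_sum _ fun l _ => hnum l) fun q => (hden t q).ne'
  have hμ : ∀ k t, Continuous
      fun q : MixParam d p K × ((t : Fin T) → Fin (n t) → Fin d → ℝ) =>
      (fun j => q.1.2.2.1 k j + ∑ l, q.1.2.2.2.1 k l j * X t l) := by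
    intro k t
    apply continuous_pi
    intro j
    exact ((continuous_apply j).comp ((continuous_apply k).comp hβ0)).add
      (continuous_finset_sum _ fun l _ =>
        (((continuous_apply j).comp ((continuous_apply l).comp
          ((continuous_apply k).comp hβ)))).mul continuous_const)
  have hinv : ∀ k, ContinuousAt
      (fun q : MixParam d p K × ((t : Fin T) → Fin (n t) → Fin d → ℝ) =>
        (q.1.2.2.2.2 k)⁻¹) q0 := by
    intro k
    have h1 : ContinuousAt Inv.inv (q0.1.2.2.2.2 k) := by
      apply continuousAt_matrix_inv
      rw [Ring.inverse_eq_inv']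
      exact continuousAt_inv₀ (hdet k).ne'
    show ContinuousAt (Inv.inv ∘ fun q : MixParam d p K ×
      ((t : Fin T) → Fin (n t) → Fin d → ℝ) => q.1.2.2.2.2 k) q0
    exact h1.comp (x := q0) (hS k).continuousAt
  have hrpow : ∀ k, ContinuousAt
      (fun q : MixParam d p K × ((t : Fin T) → Fin (n t) → Fin d → ℝ) =>
        (q.1.2.2.2.2 k).det ^ (-(1 : ℝ) / 2)) q0 := fun k =>
    ((hS k).matrix_det.continuousAt).rpow_const (Or.inl (hdet k).ne')
  have hφ : ∀ k t i, ContinuousAt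
      (fun q : MixParam d p K × ((t : Fin T) → Fin (n t) → Fin d → ℝ) =>
      (2 * Real.pi) ^ (-(d : ℝ) / 2) * (q.1.2.2.2.2 k).det ^ (-(1 : ℝ) / 2) *
        Real.exp (-(1 / 2) * dotProduct
          (q.2 t i - fun j => q.1.2.2.1 k j + ∑ l, q.1.2.2.2.1 k l j * X t l)
          ((q.1.2.2.2.2 k)⁻¹.mulVec
            (q.2 t i - fun j => q.1.2.2.1 k j + ∑ l, q.1.2.2.2.1 k l j * X t l)))) q0 := by
    intro k t i
    have hvsub : Continuous
        fun q : MixParam d p K × ((t : Fin T) → Fin (n t) → Fin d → ℝ) =>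
        (q.2 t i - fun j => q.1.2.2.1 k j + ∑ l, q.1.2.2.2.1 k l j * X t l) :=
      (hz t i).sub (hμ k t)
    have hg : Continuous fun r : Matrix (Fin d) (Fin d) ℝ × (Fin d → ℝ) =>
        dotProduct r.2 (r.1.mulVec r.2) :=
      continuous_snd.dotProduct (continuous_fst.matrix_mulVec continuous_snd)
    have hquad : ContinuousAt
        (fun q : MixParam d p K × ((t : Fin T) → Fin (n t) → Fin d → ℝ) =>
        dotProduct
          (q.2 t i - fun j => q.1.2.2.1 k j + ∑ l, q.1.2.2.2.1 k l j * X t l)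
          ((q.1.2.2.2.2 k)⁻¹.mulVec
            (q.2 t i - fun j => q.1.2.2.1 k j + ∑ l, q.1.2.2.2.1 k l j * X t l))) q0 := by
      show ContinuousAt ((fun r : Matrix (Fin d) (Fin d) ℝ × (Fin d → ℝ) =>
        dotProduct r.2 (r.1.mulVec r.2)) ∘ fun q => ((q.1.2.2.2.2 k)⁻¹,
          q.2 t i - fun j => q.1.2.2.1 k j + ∑ l, q.1.2.2.2.1 k l j * X t l)) q0
      exact hg.continuousAt.comp (x := q0) ((hinv k).prodMk hvsub.continuousAt)
    exact (continuousAt_const.mul (hrpow k)).mul (continuousAt_const.mul hquad).rexp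
  have hpos : ∀ t i, 0 < ∑ k,
      (Real.exp (q0.1.1 k + ∑ j, X t j * q0.1.2.1 k j) /
        ∑ l, Real.exp (q0.1.1 l + ∑ j, X t j * q0.1.2.1 l j)) *
      ((2 * Real.pi) ^ (-(d : ℝ) / 2) * (q0.1.2.2.2.2 k).det ^ (-(1 : ℝ) / 2) *
        Real.exp (-(1 / 2) * dotProduct
          (q0.2 t i - fun j => q0.1.2.2.1 k j + ∑ l, q0.1.2.2.2.1 k l j * X t l)
          ((q0.1.2.2.2.2 k)⁻¹.mulVec
            (q0.2 t i - fun j => q0.1.2.2.1 k j + ∑ l, q0.1.2.2.2.1 k l j * X t l)))) := by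
    intro t i
    apply Finset.sum_pos _ Finset.univ_nonempty
    intro k _
    apply mul_pos
    · exact div_pos (Real.exp_pos _) (hden t q0)
    · exact mul_pos (mul_pos (Real.rpow_pos_of_pos Real.two_pi_pos _)
        (Real.rpow_pos_of_pos (hdet k) _)) (Real.exp_pos _)
  have hsum : ∀ t i, ContinuousAt
      (fun q : MixParam d p K × ((t : Fin T) → Fin (n t) → Fin d → ℝ) => ∑ k,
      (Real.exp (q.1.1 k + ∑ j, X t j * q.1.2.1 k j) /
        ∑ l, Real.exp (q.1.1 l + ∑ j, X t j * q.1.2.1 l j)) *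
      ((2 * Real.pi) ^ (-(d : ℝ) / 2) * (q.1.2.2.2.2 k).det ^ (-(1 : ℝ) / 2) *
        Real.exp (-(1 / 2) * dotProduct
          (q.2 t i - fun j => q.1.2.2.1 k j + ∑ l, q.1.2.2.2.1 k l j * X t l)
          ((q.1.2.2.2.2 k)⁻¹.mulVec
            (q.2 t i - fun j => q.1.2.2.1 k j + ∑ l, q.1.2.2.2.1 k l j * X t l))))) q0 :=
    fun t i => tendsto_finset_sum _ fun k _ => ((hπ k t).continuousAt.mul (hφ k t i))
  have hlog : ∀ t i, ContinuousAt
      (fun q : MixParam d p K × ((t : Fin T) → Fin (n t) → Fin d → ℝ) => Real.log (∑ k,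
      (Real.exp (q.1.1 k + ∑ j, X t j * q.1.2.1 k j) /
        ∑ l, Real.exp (q.1.1 l + ∑ j, X t j * q.1.2.1 l j)) *
      ((2 * Real.pi) ^ (-(d : ℝ) / 2) * (q.1.2.2.2.2 k).det ^ (-(1 : ℝ) / 2) *
        Real.exp (-(1 / 2) * dotProduct
          (q.2 t i - fun j => q.1.2.2.1 k j + ∑ l, q.1.2.2.2.1 k l j * X t l)
          ((q.1.2.2.2.2 k)⁻¹.mulVec
            (q.2 t i - fun j => q.1.2.2.1 k j + ∑ l, q.1.2.2.2.1 k l j * X t l)))))) q0 :=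
    fun t i => (hsum t i).log (hpos t i).ne'
  unfold mixObjExp
  apply ContinuousAt.add
  apply ContinuousAt.add
  · apply ContinuousAt.neg
    apply continuousAt_const.mul
    exact tendsto_finset_sum _ fun t _ => tendsto_finset_sum _ fun i _ => hlog t i
  · exact (continuous_const.mul (continuous_finset_sum _ fun k _ =>
      continuous_finset_sum _ fun j _ =>
        continuous_abs.comp ((continuous_apply j).comp ((continuous_apply k).comp hα)))).continuousAt
  · exact (continuous_const.mul (continuous_finset_sum _ fun k _ =>
      continuous_finset_sum _ fun l _ => continuous_finset_sum _ fun j _ =>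
        continuous_abs.comp ((continuous_apply j).comp ((continuous_apply l).comp
          ((continuous_apply k).comp hβ))))).continuousAt

instance matrixFirstCountable {m n : ℕ} :
    FirstCountableTopology (Matrix (Fin m) (Fin n) ℝ) :=
  inferInstanceAs (FirstCountableTopology (Fin m → Fin n → ℝ))

/-- Proposition 1 of the paper: estimation from binned data is asymptotically
equivalent to estimation from the original data.  The data lie in an
axis-aligned cube of side `R`; for each `D`, the cube is partitioned into
`B = D^d` congruent subcubes and `h D` maps each point to the center of the
subcube containing it.  Then (i) the penalized negative log-likelihood has
minimizers over the compact parameter set `Θ` for the original and each binned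
data set, and (ii) any sequence of binned-data minimizers has a subsequence
converging to an original-data minimizer. -/
theorem binned_estimation_asymptotically_equivalent
    (d p K T : ℕ) (hd : 0 < d) (hp : 0 < p) (hK : 0 < K) (hT : 0 < T)
    (n : Fin T → ℕ) (hn : ∀ t, 0 < n t)
    (X : Fin T → Fin p → ℝ)
    (a : Fin d → ℝ) (R : ℝ) (hR : 0 < R)
    (y : (t : Fin T) → Fin (n t) → Fin d → ℝ)
    (hy : ∀ t i j, y t i j ∈ Set.Icc (a j) (a j + R))
    (lamA lamB : ℝ) (hlamA : 0 ≤ lamA) (hlamB : 0 ≤ lamB)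
    (Θ : Set (MixParam d p K)) (hΘc : IsCompact Θ) (hΘne : Θ.Nonempty)
    (c : ℝ) (hc : 0 < c)
    (hPD : ∀ θ ∈ Θ, ∀ k, (θ.2.2.2.2 k).PosDef)
    (hEig : ∀ θ ∈ Θ, ∀ k,
      (θ.2.2.2.2 k - c • (1 : Matrix (Fin d) (Fin d) ℝ)).PosSemidef)
    (h : ℕ → (Fin d → ℝ) → (Fin d → ℝ))
    (hbin : ∀ D : ℕ, 0 < D → ∀ v : Fin d → ℝ,
      (∀ j, v j ∈ Set.Icc (a j) (a j + R)) →
      ∃ b : Fin d → Fin D,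
        (∀ j, h D v j = a j + ((b j : ℝ) + 1 / 2) * (R / D)) ∧
        (∀ j, a j + (b j : ℝ) * (R / D) ≤ v j ∧
          v j ≤ a j + ((b j : ℝ) + 1) * (R / D))) :
    ({θ ∈ Θ | ∀ θ' ∈ Θ,
        mixObj d p K T n X lamA lamB θ y ≤ mixObj d p K T n X lamA lamB θ' y}.Nonempty) ∧
    (∀ D : ℕ, 0 < D →
      ({θ ∈ Θ | ∀ θ' ∈ Θ,
        mixObj d p K T n X lamA lamB θ (fun t i => h D (y t i)) ≤
          mixObj d p K T n X lamA lamB θ' (fun t i => h D (y t i))}.Nonempty)) ∧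
    (∀ θtil : ℕ → MixParam d p K,
      (∀ D : ℕ, 0 < D → θtil D ∈ Θ ∧ ∀ θ' ∈ Θ,
        mixObj d p K T n X lamA lamB (θtil D) (fun t i => h D (y t i)) ≤
          mixObj d p K T n X lamA lamB θ' (fun t i => h D (y t i))) →
      ∃ s : ℕ → ℕ, StrictMono s ∧ ∃ θstar : MixParam d p K,
        θstar ∈ Θ ∧
        (∀ θ' ∈ Θ, mixObj d p K T n X lamA lamB θstar y ≤
          mixObj d p K T n X lamA lamB θ' y) ∧
        Tendsto (fun B => θtil (s B)) atTop (𝓝 θstar)) := by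

  classical
  have hdetΘ : ∀ θ ∈ Θ, ∀ k, 0 < (θ.2.2.2.2 k).det := fun θ hθ k => (hPD θ hθ k).det_pos
  -- continuity in θ for fixed data
  have hcontθ : ∀ z : (t : Fin T) → Fin (n t) → Fin d → ℝ,
      ContinuousOn (fun θ => mixObj d p K T n X lamA lamB θ z) Θ := by
    intro z θ hθ
    apply ContinuousAt.continuousWithinAt
    have h1 : ContinuousAt (fun θ' : MixParam d p K =>
        mixObjExp d p K T n X lamA lamB (θ', z)) θ :=
      (mixObjExp_contAt hK (θ, z) (fun k => hdetΘ θ hθ k)).comp (x := θ)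
        (f := fun θ' : MixParam d p K => (θ', z))
        (continuous_id.prodMk continuous_const).continuousAt
    simpa only [mixObj_eq_exp] using h1
  refine ⟨?_, ?_, ?_⟩
  · obtain ⟨θm, hmem, hminm⟩ := hΘc.exists_isMinOn hΘne (hcontθ y)
    exact ⟨θm, hmem, fun θ' hθ' => hminm hθ'⟩
  · intro D hD
    obtain ⟨θm, hmem, hminm⟩ := hΘc.exists_isMinOn hΘne (hcontθ (fun t i => h D (y t i)))
    exact ⟨θm, hmem, fun θ' hθ' => hminm hθ'⟩
  · intro θtil hminD
    obtain ⟨θstar, hθstar, s0, hs0, hconv⟩ :=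
      hΘc.tendsto_subseq (x := fun B => θtil (B + 1))
        (fun B => (hminD (B + 1) (Nat.succ_pos B)).1)
    have hsmono : StrictMono fun B => s0 B + 1 := fun a b hab =>
      Nat.add_lt_add_right (hs0 hab) 1
    refine ⟨fun B => s0 B + 1, hsmono, θstar, hθstar, ?_, hconv⟩
    -- binned data converge to the original data
    have hzconv : Tendsto (fun D : ℕ => (fun t i => h D (y t i))) atTop
        (𝓝 y) := by
      rw [tendsto_pi_nhds]; intro t
      rw [tendsto_pi_nhds]; intro i
      rw [tendsto_pi_nhds]; intro j
      have hnear : ∀ᶠ D : ℕ in atTop, ‖h D (y t i) j - y t i j‖ ≤ R / D := by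
        filter_upwards [Filter.eventually_ge_atTop 1] with D hD
        obtain ⟨b, hb1, hb2⟩ := hbin D hD (y t i) (fun j => hy t i j)
        have hu : (0:ℝ) ≤ R / D := div_nonneg hR.le (Nat.cast_nonneg D)
        rw [Real.norm_eq_abs, hb1 j, abs_le]
        constructor <;> nlinarith [(hb2 j).1, (hb2 j).2]
      have h0 : Tendsto (fun D : ℕ => h D (y t i) j - y t i j) atTop (𝓝 0) :=
        squeeze_zero_norm' hnear (tendsto_const_div_atTop_nhds_zero_nat R)
      have h1 := h0.add (tendsto_const_nhds (x := y t i j) (f := atTop))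
      simpa using h1
    have hstop : Tendsto (fun B => s0 B + 1) atTop atTop := hsmono.tendsto_atTop
    intro θ' hθ'
    have hpair : Tendsto (fun B => ((θtil (s0 B + 1) : MixParam d p K),
        (fun t i => h (s0 B + 1) (y t i)))) atTop (𝓝 (θstar, y)) :=
      hconv.prodMk_nhds (hzconv.comp hstop)
    have hF : Tendsto (fun B => mixObj d p K T n X lamA lamB (θtil (s0 B + 1))
        (fun t i => h (s0 B + 1) (y t i))) atTop
        (𝓝 (mixObj d p K T n X lamA lamB θstar y)) := by
      simp only [mixObj_eq_exp]
      exact ((mixObjExp_contAt hK (θstar, y) (fun k => hdetΘ θstar hθstar k)).tendsto).comp hpair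
    have hpair' : Tendsto (fun B => ((θ' : MixParam d p K),
        (fun t i => h (s0 B + 1) (y t i)))) atTop (𝓝 (θ', y)) :=
      tendsto_const_nhds.prodMk_nhds (hzconv.comp hstop)
    have hG : Tendsto (fun B => mixObj d p K T n X lamA lamB θ'
        (fun t i => h (s0 B + 1) (y t i))) atTop
        (𝓝 (mixObj d p K T n X lamA lamB θ' y)) := by
      simp only [mixObj_eq_exp]
      exact ((mixObjExp_contAt hK (θ', y) (fun k => hdetΘ θ' hθ' k)).tendsto).comp hpair'
    exact le_of_tendsto_of_tendsto' hF hG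
      (fun B => (hminD (s0 B + 1) (Nat.succ_pos _)).2 θ' hθ')
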